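/- arXiv:2205.11897 — 2 statements merged into one kernel-verified Lean document; each statement's English description precedes it below -/
import Mathlib

section
/- Let (G, H, Γ) be a cut-and-project scheme, where G and H each carry a right-invariant, proper metric compatible with the topology, and let W ⊆ H be relatively compact with nonempty interior. Then the set Λ := π_G((G × W) ∩ Γ) has finite local complexity: ΛΛ⁻¹ is locally finite in G, i.e. every bounded subset of G contains only finitely many points of ΛΛ⁻¹. -/
open Pointwise Set

/-! Since `Γ` is a group, `ΛΛ⁻¹` lies in the projection of `Γ ∩ (G × WW⁻¹)`. Its points in a
bounded `B ⊆ G` therefore come from `Γ ∩ (closure B × closure W * (closure W)⁻¹)`, a discrete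
subgroup meeting a compact set, which is finite because discrete subgroups are closed. -/

theorem Subgroup.finite_inter_of_isCompact {X : Type*} [Group X] [TopologicalSpace X]
    [IsTopologicalGroup X] [T2Space X] (Γ : Subgroup X) [DiscreteTopology Γ] {K : Set X}
    (hK : IsCompact K) : ((Γ : Set X) ∩ K).Finite :=
  (hK.inter_left Subgroup.isClosed_of_discrete).finite
    ((SetLike.isDiscrete_iff_discreteTopology.mpr ‹_›).mono inter_subset_left)

section ModelSet

variable {G H : Type*} [Group G] [Group H] (Γ : Subgroup (G × H))

def modelSet (W : Set H) : Set G :=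
  Prod.fst '' ((univ ×ˢ W) ∩ (Γ : Set (G × H)))

theorem modelSet_mono {V W : Set H} (h : V ⊆ W) : modelSet Γ V ⊆ modelSet Γ W :=
  image_mono (inter_subset_inter_left _ (prod_mono subset_rfl h))

theorem modelSet_mul_inv_subset (W : Set H) :
    modelSet Γ W * (modelSet Γ W)⁻¹ ⊆ modelSet Γ (W * W⁻¹) := by
  rintro _ ⟨_, ⟨γ, ⟨⟨-, hγW⟩, hγ⟩, rfl⟩, g, ⟨δ, ⟨⟨-, hδW⟩, hδ⟩, hδg⟩, rfl⟩
  obtain rfl := inv_eq_iff_eq_inv.mpr hδg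
  exact ⟨γ * δ⁻¹, ⟨⟨mem_univ _, mul_mem_mul hγW (inv_mem_inv.mpr hδW)⟩,
    mul_mem hγ (inv_mem hδ)⟩, rfl⟩

theorem finite_inter_modelSet [TopologicalSpace G] [TopologicalSpace H] [IsTopologicalGroup G]
    [IsTopologicalGroup H] [T2Space G] [T2Space H] [DiscreteTopology Γ] {K : Set G} {L : Set H}
    (hK : IsCompact K) (hL : IsCompact L) : (K ∩ modelSet Γ L).Finite := by
  refine ((Γ.finite_inter_of_isCompact (hK.prod hL)).image Prod.fst).subset ?_
  rintro _ ⟨hgK, γ, ⟨⟨-, hγL⟩, hγ⟩, rfl⟩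
  exact ⟨γ, ⟨hγ, hgK, hγL⟩, rfl⟩

end ModelSet

theorem cut_and_project_flc_general
    {G H : Type*}
    [Group G] [MetricSpace G] [IsTopologicalGroup G] [ProperSpace G]
    [Group H] [MetricSpace H] [IsTopologicalGroup H]
    (Γ : Subgroup (G × H)) [DiscreteTopology Γ]
    (W : Set H) (hWrc : IsCompact (closure W)) :
    ∀ B : Set G, Bornology.IsBounded B →
      (B ∩ ((Prod.fst '' ((Set.univ ×ˢ W) ∩ (Γ : Set (G × H)))) *
        (Prod.fst '' ((Set.univ ×ˢ W) ∩ (Γ : Set (G × H))))⁻¹)).Finite := by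
  intro B hB
  have hΛ : modelSet Γ W * (modelSet Γ W)⁻¹ ⊆ modelSet Γ (closure W * (closure W)⁻¹) :=
    (modelSet_mul_inv_subset Γ W).trans
      (modelSet_mono Γ (mul_subset_mul subset_closure (inv_subset_inv.mpr subset_closure)))
  exact (finite_inter_modelSet Γ hB.isCompact_closure (hWrc.mul hWrc.inv)).subset
    (inter_subset_inter subset_closure hΛ)

/-- Let `(G, H, Γ)` be a cut-and-project scheme, where `G` and `H` each carry a
right-invariant, proper metric compatible with the topology, and let `W ⊆ H` be relatively
compact with nonempty interior.  Then `Λ := π_G((G × W) ∩ Γ)` has finite local complexity: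
`ΛΛ⁻¹` is locally finite in `G` (every bounded set contains finitely many of its points). -/
theorem cut_and_project_flc
    {G H : Type*}
    [Group G] [MetricSpace G] [IsTopologicalGroup G] [ProperSpace G] [SecondCountableTopology G]
    [Group H] [MetricSpace H] [IsTopologicalGroup H] [ProperSpace H] [SecondCountableTopology H]
    (hinvG : ∀ x y g : G, dist (x * g) (y * g) = dist x y)
    (hinvH : ∀ x y g : H, dist (x * g) (y * g) = dist x y)
    (Γ : Subgroup (G × H)) [DiscreteTopology Γ]
    (hcocompact : ∃ C : Set (G × H), IsCompact C ∧ C * (Γ : Set (G × H)) = Set.univ)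
    (hinj : Set.InjOn Prod.fst (Γ : Set (G × H)))
    (hdense : Dense (Prod.snd '' (Γ : Set (G × H))))
    (W : Set H) (hWrc : IsCompact (closure W)) (hWint : (interior W).Nonempty) :
    ∀ B : Set G, Bornology.IsBounded B →
      (B ∩ ((Prod.fst '' ((Set.univ ×ˢ W) ∩ (Γ : Set (G × H)))) *
        (Prod.fst '' ((Set.univ ×ˢ W) ∩ (Γ : Set (G × H))))⁻¹)).Finite :=
  cut_and_project_flc_general Γ W hWrc
end

section
/- Let G and H be lcsc groups, each with a right-invariant, proper metric compatible with its topology, let μ_G be a right-invariant Haar measure on G, let Γ ⊆ G × H be a uniform lattice such that π_H(Γ) is dense in H, and let A ⊆ H be a nonempty bounded open set. Then there exist constants k₁ > 0 and C' > 0 such that for all r > k₁ the number of lattice points satisfies |(B_r^G(e) × A) ∩ Γ| ≥ C' · μ_G(B_{r−k₁}^G(e)). -/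
/-! Cocompactness of `Γ` puts a lattice point at bounded distance from every `(g, 1)`. Density
of `π_H(Γ)` lets us move its `H`-component into the open set `A` by left multiplication with a
lattice point, and compactness means finitely many such correctors suffice, so the displacement
in `G` stays bounded. Hence the `G`-components of `Γ ∩ (G × A)` are `k₁`-dense in `G`, the
`k₁`-balls around those lying in `B_r(e)` cover `B_{r-k₁}(e)`, and by right invariance all these
balls have measure `μ(B_{k₁}(e))`. -/

open Pointwise

open Metric MeasureTheory Set

section Lattice

variable {G H : Type*} [PseudoMetricSpace G] [TopologicalSpace H] [Group H]

theorem exists_dist_fst_le_of_dense_snd [ContinuousMul H] (x₀ : G)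
    {S : Set (G × H)} (hdense : Dense (Prod.snd '' S)) {A K : Set H} (hA : IsOpen A)
    (hAne : A.Nonempty) (hK : IsCompact K) :
    ∃ M, ∀ h ∈ K, ∃ γ ∈ S, γ.2 * h ∈ A ∧ dist γ.1 x₀ ≤ M := by
  have hcover : K ⊆ ⋃ γ ∈ S, (γ.2 * ·) ⁻¹' A := by
    intro h _
    obtain ⟨a, ha⟩ := hAne
    obtain ⟨_, ⟨γ, hγ, rfl⟩, hγA⟩ := hdense.exists_mem_open (hA.preimage (continuous_mul_const h))
      ⟨a * h⁻¹, by simpa using ha⟩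
    exact mem_iUnion₂.2 ⟨γ, hγ, hγA⟩
  obtain ⟨T, hTS, hT, hKT⟩ := hK.elim_finite_subcover_image
    (fun γ _ => hA.preimage (continuous_const_mul γ.2)) hcover
  obtain ⟨M, hM⟩ := (hT.image fun γ => dist γ.1 x₀).bddAbove
  refine ⟨M, fun h hh => ?_⟩
  obtain ⟨γ, hγT, hγ⟩ := mem_iUnion₂.1 (hKT hh)
  exact ⟨γ, hTS hγT, hγ, hM (mem_image_of_mem _ hγT)⟩

variable [Group G] [IsIsometricSMul Gᵐᵒᵖ G]

theorem exists_dist_fst_le_of_mul_eq_univ [ContinuousMul H] [ContinuousInv H] {S C : Set (G × H)}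
    (hC : IsCompact C) (hCS : C * S = univ) (a : H) :
    ∃ R, ∃ K, IsCompact K ∧ ∀ g : G, ∃ γ ∈ S, γ.2 ∈ K ∧ dist γ.1 g ≤ R := by
  obtain ⟨R, hR⟩ := hC.bddAbove_image (f := fun c : G × H => dist 1 c.1) (by fun_prop)
  refine ⟨R, (fun c : G × H => c.2⁻¹ * a) '' C, hC.image (by fun_prop), fun g => ?_⟩
  obtain ⟨c, hc, γ, hγ, hcγ⟩ := mem_mul.1 (hCS.symm ▸ mem_univ (g, a))
  have hg : c.1 * γ.1 = g := congrArg Prod.fst hcγ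
  have ha : c.2 * γ.2 = a := congrArg Prod.snd hcγ
  refine ⟨γ, hγ, ⟨c, hc, by simp [← ha]⟩, ?_⟩
  calc dist γ.1 g = dist (1 * γ.1) (c.1 * γ.1) := by rw [one_mul, hg]
    _ = dist 1 c.1 := dist_mul_right _ _ _
    _ ≤ R := hR (mem_image_of_mem _ hc)

theorem exists_forall_exists_mem_snd_mem_dist_fst_lt [IsTopologicalGroup H] (Γ : Subgroup (G × H))
    {C : Set (G × H)} (hC : IsCompact C) (hCΓ : C * (Γ : Set (G × H)) = univ)
    (hdense : Dense (Prod.snd '' (Γ : Set (G × H)))) {A : Set H} (hA : IsOpen A)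
    (hAne : A.Nonempty) :
    ∃ k > 0, ∀ g : G, ∃ γ ∈ Γ, γ.2 ∈ A ∧ dist γ.1 g < k := by
  obtain ⟨R, K, hK, hRK⟩ := exists_dist_fst_le_of_mul_eq_univ hC hCΓ (1 : H)
  obtain ⟨M, hM⟩ := exists_dist_fst_le_of_dense_snd (1 : G) hdense hA hAne hK
  refine ⟨max (M + R) 0 + 1, by positivity, fun g => ?_⟩
  obtain ⟨γ₀, hγ₀, hγ₀K, hγ₀g⟩ := hRK g
  obtain ⟨γ, hγ, hγA, hγ1⟩ := hM _ hγ₀K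
  refine ⟨γ * γ₀, Γ.mul_mem hγ hγ₀, hγA, ?_⟩
  calc dist (γ * γ₀).1 g ≤ dist (γ.1 * γ₀.1) (1 * γ₀.1) + dist γ₀.1 g := by
        rw [one_mul]; exact dist_triangle _ _ _
    _ = dist γ.1 1 + dist γ₀.1 g := by rw [dist_mul_right]
    _ ≤ M + R := add_le_add hγ1 hγ₀g
    _ < max (M + R) 0 + 1 := by linarith [le_max_left (M + R) 0]

end Lattice

section Measure

variable {G : Type*} [Group G] [PseudoMetricSpace G] [IsIsometricSMul Gᵐᵒᵖ G]
  [MeasurableSpace G] [MeasurableMul G] (μ : Measure G) [μ.IsMulRightInvariant]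

theorem measure_ball_eq_measure_ball_one (x : G) (k : ℝ) : μ (ball x k) = μ (ball 1 k) := by
  rw [← measure_preimage_mul_right μ x⁻¹ (ball 1 k), preimage_mul_right_ball, one_div, inv_inv]

theorem measure_le_card_mul_measure_ball_one {ι : Type*} (t : Finset ι) (f : ι → G) {s : Set G}
    {k : ℝ} (hs : s ⊆ ⋃ i ∈ t, ball (f i) k) : μ s ≤ t.card * μ (ball 1 k) :=
  calc μ s ≤ ∑ i ∈ t, μ (ball (f i) k) := (measure_mono hs).trans (measure_biUnion_finset_le _ _)
    _ = t.card * μ (ball 1 k) := by simp [measure_ball_eq_measure_ball_one]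

end Measure

theorem growth_lemma_lower_general
    {G H : Type*}
    [Group G] [MetricSpace G] [IsTopologicalGroup G] [ProperSpace G]
    [Group H] [MetricSpace H] [IsTopologicalGroup H] [ProperSpace H]
    [MeasurableSpace G] [BorelSpace G]
    (hinvG : ∀ x y g : G, dist (x * g) (y * g) = dist x y)
    (μ : MeasureTheory.Measure G)
    [MeasureTheory.Measure.IsMulRightInvariant μ]
    [MeasureTheory.IsFiniteMeasureOnCompacts μ]
    [MeasureTheory.Measure.IsOpenPosMeasure μ]
    (Γ : Subgroup (G × H)) [DiscreteTopology Γ]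
    (hcocompact : ∃ C : Set (G × H), IsCompact C ∧ C * (Γ : Set (G × H)) = Set.univ)
    (hdense : Dense (Prod.snd '' (Γ : Set (G × H))))
    (A : Set H) (hAne : A.Nonempty) (hAbdd : Bornology.IsBounded A) (hAopen : IsOpen A) :
    ∃ k₁ : ℝ, 0 < k₁ ∧ ∃ C' : ℝ, 0 < C' ∧ ∀ r : ℝ, k₁ < r →
      C' * (μ (Metric.ball (1 : G) (r - k₁))).toReal
        ≤ (Nat.card ↥((Metric.ball (1 : G) r ×ˢ A) ∩ (Γ : Set (G × H))) : ℝ) := by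
  have : IsIsometricSMul Gᵐᵒᵖ G := ⟨fun c => Isometry.of_dist_eq fun x y => hinvG x y c.unop⟩
  obtain ⟨C, hC, hCΓ⟩ := hcocompact
  obtain ⟨k, hk, hnear⟩ :=
    exists_forall_exists_mem_snd_mem_dist_fst_lt Γ hC hCΓ hdense hAopen hAne
  have hV : 0 < (μ (ball (1 : G) k)).toReal :=
    ENNReal.toReal_pos (measure_ball_pos μ 1 hk).ne' measure_ball_lt_top.ne
  refine ⟨k, hk, (μ (ball (1 : G) k)).toReal⁻¹, inv_pos.2 hV, fun r hr => ?_⟩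
  have hfin : (ball (1 : G) r ×ˢ A ∩ Γ).Finite :=
    finite_isBounded_inter_isClosed (isDiscrete_iff_discreteTopology.2 ‹_›)
      (isBounded_ball.prod hAbdd) Γ.isClosed_of_discrete
  have hcover : ball (1 : G) (r - k) ⊆ ⋃ γ ∈ hfin.toFinset, ball γ.1 k := by
    intro g hg
    obtain ⟨γ, hγ, hγA, hγg⟩ := hnear g
    refine mem_iUnion₂.2 ⟨γ, hfin.mem_toFinset.2 ⟨⟨?_, hγA⟩, hγ⟩, mem_ball'.2 hγg⟩
    calc dist γ.1 1 ≤ dist γ.1 g + dist g 1 := dist_triangle _ _ _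
      _ < k + (r - k) := add_lt_add hγg hg
      _ = r := by ring
  rw [inv_mul_le_iff₀ hV, Nat.card_coe_set_eq, ncard_eq_toFinset_card _ hfin, mul_comm]
  simpa using ENNReal.toReal_mono (by finiteness)
    (measure_le_card_mul_measure_ball_one μ _ Prod.fst hcover)

/-- Growth lemma, lower bound.  Let `G` and `H` be lcsc groups, each with a
right-invariant, proper, compatible metric, `μ` a right-invariant Haar measure on `G`,
`Γ ⊆ G × H` a uniform lattice with `π_H(Γ)` dense in `H`, and `A ⊆ H` a nonempty bounded open
set.  Then there exist constants `k₁ > 0` and `C' > 0` such that for all `r > k₁`,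
`|(B_r^G(e) × A) ∩ Γ| ≥ C' · μ(B_{r−k₁}^G(e))`. -/
theorem growth_lemma_lower
    {G H : Type*}
    [Group G] [MetricSpace G] [IsTopologicalGroup G] [ProperSpace G] [SecondCountableTopology G]
    [Group H] [MetricSpace H] [IsTopologicalGroup H] [ProperSpace H] [SecondCountableTopology H]
    [MeasurableSpace G] [BorelSpace G]
    (hinvG : ∀ x y g : G, dist (x * g) (y * g) = dist x y)
    (hinvH : ∀ x y g : H, dist (x * g) (y * g) = dist x y)
    (μ : MeasureTheory.Measure G)
    [MeasureTheory.Measure.IsMulRightInvariant μ]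
    [MeasureTheory.IsFiniteMeasureOnCompacts μ]
    [MeasureTheory.Measure.IsOpenPosMeasure μ]
    (Γ : Subgroup (G × H)) [DiscreteTopology Γ]
    (hcocompact : ∃ C : Set (G × H), IsCompact C ∧ C * (Γ : Set (G × H)) = Set.univ)
    (hdense : Dense (Prod.snd '' (Γ : Set (G × H))))
    (A : Set H) (hAne : A.Nonempty) (hAbdd : Bornology.IsBounded A) (hAopen : IsOpen A) :
    ∃ k₁ : ℝ, 0 < k₁ ∧ ∃ C' : ℝ, 0 < C' ∧ ∀ r : ℝ, k₁ < r →
      C' * (μ (Metric.ball (1 : G) (r - k₁))).toReal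
        ≤ (Nat.card ↥((Metric.ball (1 : G) r ×ˢ A) ∩ (Γ : Set (G × H))) : ℝ) :=
  growth_lemma_lower_general hinvG μ Γ hcocompact hdense A hAne hAbdd hAopen
end
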